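/- For i ≥ 1 the shifted Legendre polynomial L_i satisfies the explicit B-spline expansion L_i(t) = Σ_{j=0}^{n+m} φ_{j,i} N_{-n+j,n}(t) for t ∈ [0,1), where φ_{j,i} := Σ_{h=0}^{i} ((-i)_h (i+1)_h / (C(n,h)(h!)²)) · e_h(t_{-n+j+1},...,t_j), e_h being the h-th elementary symmetric polynomial, and C(n,h) the binomial coefficient. -/

import Mathlib

open Polynomial Finset

/-- The `i`-th shifted Legendre polynomial, `L_i(t) = (1/i!) dⁱ/dtⁱ [(1-t)ⁱ tⁱ]`. -/
noncomputable def shiftedLegendre (i : ℕ) : Polynomial ℝ :=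
  Polynomial.C ((i.factorial : ℝ))⁻¹ *
    Polynomial.derivative^[i] ((1 - Polynomial.X) ^ i * Polynomial.X ^ i)

/-- Normalized B-spline functions of degree `n` over the knot sequence `T` (index-shifted so
that `N_{i,n}` uses knots `T i, …, T (i+n+1)`), via the Cox–de Boor recursion with the
convention `0/0 = 0` (division by zero is zero in `ℝ`). -/
noncomputable def bspl (T : ℕ → ℝ) : ℕ → ℕ → ℝ → ℝ
  | 0, i, x => if T i ≤ x ∧ x < T (i + 1) then 1 else 0
  | n + 1, i, x =>
      (x - T i) / (T (i + n + 1) - T i) * bspl T n i x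
        + (T (i + n + 2) - x) / (T (i + n + 2) - T (i + 1)) * bspl T n (i + 1) x

lemma bspl_support (T : ℕ → ℝ) (hmono : Monotone T) :
    ∀ (k j : ℕ) (t : ℝ), (t < T j ∨ T (j + k + 1) ≤ t) → bspl T k j t = 0
  | 0, j, t, h => by
    simp only [bspl, ite_eq_right_iff]
    rintro ⟨h1, h2⟩
    rcases h with h | h
    · exact absurd h1 (not_le.2 h)
    · exact absurd h2 (not_lt.2 h)
  | k + 1, j, t, h => by
    have e1 : bspl T k j t = 0 := by
      apply bspl_support T hmono
      rcases h with h | h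
      · exact Or.inl h
      · exact Or.inr (le_trans (hmono (by omega)) h)
    have e2 : bspl T k (j + 1) t = 0 := by
      apply bspl_support T hmono
      rcases h with h | h
      · exact Or.inl (lt_of_lt_of_le h (hmono (Nat.le_succ j)))
      · refine Or.inr (le_trans (le_of_eq ?_) h)
        congr 1
        omega
    simp only [bspl, e1, e2, mul_zero, add_zero]


lemma marsden (n m : ℕ) (T : ℕ → ℝ) (hmono : Monotone T)
    (h0 : ∀ j ≤ n, T j = 0) (h1 : ∀ j, n + m + 1 ≤ j → T j = 1) :
    ∀ k, k ≤ n → ∀ t ∈ Set.Ico (0:ℝ) 1, ∀ y : ℝ,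
      (y - t) ^ k = ∑ j ∈ Finset.Icc (n - k) (n + m),
        (∏ s ∈ Finset.range k, (y - T (j + 1 + s))) * bspl T k j t := by
  intro k
  induction k with
  | zero =>
    intro _ t ht y
    obtain ⟨ht0, ht1⟩ := ht
    simp only [pow_zero, Finset.prod_range_zero, one_mul, Nat.sub_zero, bspl]
    set s := (Finset.Icc n (n + m)).filter (fun j => T j ≤ t) with hs
    have hns : n ∈ s := by
      simp only [hs, Finset.mem_filter, Finset.mem_Icc]
      exact ⟨⟨le_rfl, Nat.le_add_right _ _⟩, by rw [h0 n le_rfl]; exact ht0⟩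
    set j0 := s.max' ⟨n, hns⟩ with hj0
    have hj0s : j0 ∈ s := s.max'_mem _
    have hj0Icc : j0 ∈ Finset.Icc n (n + m) := (Finset.mem_filter.1 hj0s).1
    have hj0le : j0 ≤ n + m := (Finset.mem_Icc.1 hj0Icc).2
    have hj0ge : n ≤ j0 := (Finset.mem_Icc.1 hj0Icc).1
    have hTj0 : T j0 ≤ t := (Finset.mem_filter.1 hj0s).2
    have hlt : t < T (j0 + 1) := by
      by_contra hcon
      push_neg at hcon
      rcases eq_or_lt_of_le hj0le with heq | hlt'
      · rw [h1 (j0 + 1) (by omega)] at hcon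
        exact absurd hcon (not_le.2 ht1)
      · have hmem : j0 + 1 ∈ s := by
          simp only [hs, Finset.mem_filter, Finset.mem_Icc]
          exact ⟨⟨by omega, by omega⟩, hcon⟩
        have := Finset.le_max' s _ hmem
        omega
    rw [Finset.sum_eq_single_of_mem j0 hj0Icc]
    · rw [if_pos ⟨hTj0, hlt⟩]
    · intro b hb hne
      rw [if_neg]
      rintro ⟨hb1, hb2⟩
      rcases lt_or_gt_of_ne hne with hb' | hb'
      · exact absurd hb2 (not_lt.2 (le_trans (hmono (by omega)) hTj0))
      · have hmem : b ∈ s := by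
          simp only [hs, Finset.mem_filter]
          exact ⟨hb, hb1⟩
        have := Finset.le_max' s b hmem
        omega
  | succ k ih =>
    intro hk t ht y
    have hk' : k ≤ n := Nat.le_of_succ_le hk
    have ht' := ht
    obtain ⟨ht0, ht1⟩ := ht'
    have hb : ∀ j, bspl T (k + 1) j t
        = (t - T j) / (T (j + k + 1) - T j) * bspl T k j t
          + (T (j + k + 2) - t) / (T (j + k + 2) - T (j + 1)) * bspl T k (j + 1) t :=
      fun j => rfl
    simp only [hb, mul_add]
    rw [Finset.sum_add_distrib]
    -- first sum : trim left boundary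
    have e1 : ∑ j ∈ Finset.Icc (n - (k + 1)) (n + m),
          (∏ s ∈ Finset.range (k + 1), (y - T (j + 1 + s))) *
            ((t - T j) / (T (j + k + 1) - T j) * bspl T k j t)
        = ∑ j ∈ Finset.Icc (n - k) (n + m),
          (∏ s ∈ Finset.range (k + 1), (y - T (j + 1 + s))) *
            ((t - T j) / (T (j + k + 1) - T j) * bspl T k j t) := by
      refine (Finset.sum_subset (Finset.Icc_subset_Icc_left (by omega)) ?_).symm
      intro x hx hx'
      rw [Finset.mem_Icc] at hx hx'
      have hxk : x + k + 1 ≤ n := by omega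
      have hz : bspl T k x t = 0 := by
        apply bspl_support T hmono
        exact Or.inr (by rw [h0 _ hxk]; exact ht0)
      rw [hz, mul_zero, mul_zero]
    -- second sum : reindex j ↦ j+1, then trim right boundary
    have e2 : ∑ j ∈ Finset.Icc (n - (k + 1)) (n + m),
          (∏ s ∈ Finset.range (k + 1), (y - T (j + 1 + s))) *
            ((T (j + k + 2) - t) / (T (j + k + 2) - T (j + 1)) * bspl T k (j + 1) t)
        = ∑ j ∈ Finset.Icc (n - k) (n + m),
          ((y - T j) * ∏ s ∈ Finset.range k, (y - T (j + 1 + s))) *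
            ((T (j + k + 1) - t) / (T (j + k + 1) - T j) * bspl T k j t) := by
      have hstep : ∀ j : ℕ,
          (∏ s ∈ Finset.range (k + 1), (y - T (j + 1 + s))) *
            ((T (j + k + 2) - t) / (T (j + k + 2) - T (j + 1)) * bspl T k (j + 1) t)
          = ((y - T (j + 1)) * ∏ s ∈ Finset.range k, (y - T ((j + 1) + 1 + s))) *
            ((T ((j + 1) + k + 1) - t) / (T ((j + 1) + k + 1) - T (j + 1)) *
              bspl T k (j + 1) t) := by
        intro j
        have hp : ∏ s ∈ Finset.range (k + 1), (y - T (j + 1 + s))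
            = (∏ s ∈ Finset.range k, (y - T ((j + 1) + 1 + s))) * (y - T (j + 1)) := by
          rw [Finset.prod_range_succ']
          congr 1
          exact Finset.prod_congr rfl fun s _ => by congr 2; omega
        have hi : j + 1 + k + 1 = j + k + 2 := by omega
        rw [hp, hi]
        ring
      have hmap : Finset.Icc (n - k) (n + m + 1)
          = (Finset.Icc (n - (k + 1)) (n + m)).map (addRightEmbedding 1) := by
        rw [Finset.map_add_right_Icc]
        congr 1
        omega
      have e2a : ∑ j ∈ Finset.Icc (n - (k + 1)) (n + m),
            (∏ s ∈ Finset.range (k + 1), (y - T (j + 1 + s))) *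
              ((T (j + k + 2) - t) / (T (j + k + 2) - T (j + 1)) * bspl T k (j + 1) t)
          = ∑ j ∈ Finset.Icc (n - k) (n + m + 1),
            ((y - T j) * ∏ s ∈ Finset.range k, (y - T (j + 1 + s))) *
              ((T (j + k + 1) - t) / (T (j + k + 1) - T j) * bspl T k j t) := by
        rw [hmap, Finset.sum_map]
        refine Finset.sum_congr rfl fun j _ => ?_
        simp only [addRightEmbedding_apply]
        exact hstep j
      rw [e2a]
      refine (Finset.sum_subset (Finset.Icc_subset_Icc_right (by omega)) ?_).symm
      intro x hx hx'
      rw [Finset.mem_Icc] at hx hx'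
      have hxge : n + m + 1 ≤ x := by omega
      have hz : bspl T k x t = 0 := by
        apply bspl_support T hmono
        exact Or.inl (lt_of_lt_of_le ht1 (le_of_eq (h1 x hxge).symm))
      rw [hz, mul_zero, mul_zero]
    rw [e1, e2, ← Finset.sum_add_distrib]
    have hcomb : ∀ j ∈ Finset.Icc (n - k) (n + m),
        (∏ s ∈ Finset.range (k + 1), (y - T (j + 1 + s))) *
            ((t - T j) / (T (j + k + 1) - T j) * bspl T k j t)
          + ((y - T j) * ∏ s ∈ Finset.range k, (y - T (j + 1 + s))) *
            ((T (j + k + 1) - t) / (T (j + k + 1) - T j) * bspl T k j t)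
        = (y - t) * ((∏ s ∈ Finset.range k, (y - T (j + 1 + s))) * bspl T k j t) := by
      intro j _
      rcases eq_or_ne (bspl T k j t) 0 with hz | hz
      · rw [hz]; ring
      have hTle : T j ≤ t := by
        by_contra hcon
        exact hz (bspl_support T hmono k j t (Or.inl (not_le.1 hcon)))
      have hTlt : t < T (j + k + 1) := by
        by_contra hcon
        exact hz (bspl_support T hmono k j t (Or.inr (not_lt.1 hcon)))
      have hd : T (j + k + 1) - T j ≠ 0 := sub_ne_zero.2 (ne_of_gt (lt_of_le_of_lt hTle hTlt))
      have hp : ∏ s ∈ Finset.range (k + 1), (y - T (j + 1 + s))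
          = (∏ s ∈ Finset.range k, (y - T (j + 1 + s))) * (y - T (j + k + 1)) := by
        rw [Finset.prod_range_succ]
        congr 3
        omega
      rw [hp]
      field_simp
      ring
    rw [Finset.sum_congr rfl hcomb, ← Finset.mul_sum, ← ih hk' t ht y]
    ring


lemma prod_Icc_one_shift (f : ℕ → ℝ) (n : ℕ) :
    ∏ s ∈ Finset.Icc 1 n, f s = ∏ s ∈ Finset.range n, f (s + 1) := by
  have : Finset.Icc 1 n = (Finset.range n).map ⟨fun s => s + 1, fun a b h => Nat.succ_injective h⟩ := by
    ext x
    simp only [Finset.mem_Icc, Finset.mem_map, Finset.mem_range, Function.Embedding.coeFn_mk]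
    constructor
    · rintro ⟨h1, h2⟩; exact ⟨x - 1, by omega, by show x - 1 + 1 = x; omega⟩
    · rintro ⟨a, ha, rfl⟩; show 1 ≤ a + 1 ∧ a + 1 ≤ n; omega
  rw [this, Finset.prod_map]
  rfl


lemma monomial_expansion (n m : ℕ) (T : ℕ → ℝ) (hmono : Monotone T)
    (h0 : ∀ j ≤ n, T j = 0) (h1 : ∀ j, n + m + 1 ≤ j → T j = 1)
    (h : ℕ) (hh : h ≤ n) (t : ℝ) (ht : t ∈ Set.Ico (0:ℝ) 1) :
    (n.choose h : ℝ) * t ^ h =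
      ∑ j ∈ Finset.range (n + m + 1),
        (∑ S ∈ Finset.powersetCard h (Finset.Icc 1 n), ∏ s ∈ S, T (j + s)) * bspl T n j t := by
  have hrange : Finset.Icc 0 (n + m) = Finset.range (n + m + 1) := by
    ext x; simp [Nat.lt_succ_iff]
  have hpq : ((X - C t) ^ n : ℝ[X])
      = ∑ j ∈ Finset.range (n + m + 1),
          (∏ s ∈ Finset.Icc 1 n, (X - C (T (j + s)))) * C (bspl T n j t) := by
    apply Polynomial.funext
    intro y
    have hM := marsden n m T hmono h0 h1 n le_rfl t ht y
    rw [Nat.sub_self, hrange] at hM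
    rw [eval_pow, eval_sub, eval_X, eval_C, eval_finset_sum, hM]
    refine Finset.sum_congr rfl fun j _ => ?_
    rw [eval_mul, eval_prod, eval_C]
    simp only [eval_sub, eval_X, eval_C]
    rw [prod_Icc_one_shift (fun s => y - T (j + s)) n]
    congr 1
    exact Finset.prod_congr rfl fun s _ => by congr 2; omega
  have hcard : (Finset.Icc 1 n).card = n := by
    rw [Nat.card_Icc]
    omega
  have hc := congrArg (fun p : ℝ[X] => p.coeff (n - h)) hpq
  have hl : ((X - C t) ^ n : ℝ[X]).coeff (n - h) = (-1) ^ h * ((n.choose h : ℝ) * t ^ h) := by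
    rw [sub_eq_add_neg, ← C_neg, coeff_X_add_C_pow, Nat.sub_sub_self hh, Nat.choose_symm hh,
      neg_pow]
    ring
  have hr : (∑ j ∈ Finset.range (n + m + 1),
          (∏ s ∈ Finset.Icc 1 n, (X - C (T (j + s)))) * C (bspl T n j t)).coeff (n - h)
      = (-1) ^ h * ∑ j ∈ Finset.range (n + m + 1),
          (∑ S ∈ Finset.powersetCard h (Finset.Icc 1 n), ∏ s ∈ S, T (j + s)) *
            bspl T n j t := by
    rw [finset_sum_coeff, Finset.mul_sum]
    refine Finset.sum_congr rfl fun j _ => ?_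
    rw [coeff_mul_C]
    have hprod : (∏ s ∈ Finset.Icc 1 n, (X - C (T (j + s))) : ℝ[X])
        = ∏ s ∈ Finset.Icc 1 n, (X + C (-(T (j + s)))) := by
      refine Finset.prod_congr rfl fun s _ => ?_
      rw [C_neg, sub_eq_add_neg]
    rw [hprod, Finset.prod_X_add_C_coeff _ _ (by rw [hcard]; omega)]
    rw [hcard, Nat.sub_sub_self hh]
    have hes : ∑ S ∈ Finset.powersetCard h (Finset.Icc 1 n), ∏ s ∈ S, (-(T (j + s)))
        = (-1) ^ h * ∑ S ∈ Finset.powersetCard h (Finset.Icc 1 n), ∏ s ∈ S, T (j + s) := by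
      rw [Finset.mul_sum]
      refine Finset.sum_congr rfl fun S hS => ?_
      have hcardS : S.card = h := (Finset.mem_powersetCard.1 hS).2
      have hneg : ∏ s ∈ S, -T (j + s) = ∏ s ∈ S, ((-1) * T (j + s)) :=
        Finset.prod_congr rfl fun s _ => by ring
      rw [hneg, Finset.prod_mul_distrib, Finset.prod_const, hcardS]
    rw [hes]
    ring
  rw [hl, hr] at hc
  have hne : ((-1 : ℝ)) ^ h ≠ 0 := pow_ne_zero _ (by norm_num)
  exact mul_left_cancel₀ hne hc


lemma poch_neg (i k : ℕ) :
    (ascPochhammer ℝ k).eval (-(i:ℝ)) = (-1) ^ k * (i.descFactorial k : ℝ) := by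
  induction k with
  | zero => simp
  | succ k ih =>
    rw [ascPochhammer_succ_eval, ih, Nat.descFactorial_succ]
    rcases le_or_gt k i with hk | hk
    · push_cast [Nat.cast_sub hk]
      ring
    · have hz : i.descFactorial k = 0 := Nat.descFactorial_eq_zero_iff_lt.2 hk
      simp [hz]


lemma poch_pos (i k : ℕ) :
    (ascPochhammer ℝ k).eval ((i:ℝ) + 1) = (k.factorial : ℝ) * ((i + k).choose k : ℝ) := by
  have hcast : ((i:ℝ) + 1) = ((i + 1 : ℕ) : ℝ) := by push_cast; ring
  rw [hcast, ← ascPochhammer_eval_cast, ascPochhammer_nat_eq_ascFactorial,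
    Nat.ascFactorial_eq_factorial_mul_choose]
  push_cast
  ring


lemma shiftedLegendre_eval (i : ℕ) (t : ℝ) :
    (_root_.shiftedLegendre i).eval t =
      ∑ k ∈ Finset.range (i + 1),
        (-1 : ℝ) ^ k * (i.choose k : ℝ) * ((i + k).choose k : ℝ) * t ^ k := by
  have hexp : ((1 - X : ℝ[X])) ^ i * X ^ i
      = ∑ k ∈ Finset.range (i + 1), C ((-1 : ℝ) ^ k * (i.choose k : ℝ)) * X ^ (i + k) := by
    rw [sub_eq_add_neg, add_comm, add_pow, Finset.sum_mul]
    refine Finset.sum_congr rfl fun k hk => ?_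
    rw [one_pow, mul_one]
    have hnx : ((-X : ℝ[X])) ^ k = C ((-1 : ℝ) ^ k) * X ^ k := by
      rw [neg_pow, ← C_1, ← C_neg, ← C_pow]
    rw [hnx]
    rw [← C_eq_natCast, pow_add, C_mul]
    ring
  have hder : Polynomial.derivative^[i] ((1 - X : ℝ[X]) ^ i * X ^ i)
      = ∑ k ∈ Finset.range (i + 1),
          C ((-1 : ℝ) ^ k * (i.choose k : ℝ)) * (((i + k).descFactorial i : ℝ[X]) * X ^ k) := by
    rw [hexp, Polynomial.iterate_derivative_sum]
    refine Finset.sum_congr rfl fun k _ => ?_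
    rw [Polynomial.iterate_derivative_C_mul, Polynomial.iterate_derivative_X_pow_eq_natCast_mul,
      Nat.add_sub_cancel_left]
  rw [_root_.shiftedLegendre, eval_mul, eval_C, hder, eval_finset_sum, Finset.mul_sum]
  refine Finset.sum_congr rfl fun k _ => ?_
  rw [eval_mul, eval_C, eval_mul, eval_pow, eval_X, eval_natCast]
  have hdf : ((i + k).descFactorial i : ℝ) = (i.factorial : ℝ) * ((i + k).choose k : ℝ) := by
    rw [Nat.descFactorial_eq_factorial_mul_choose, Nat.choose_symm_add]
    push_cast
    ring
  rw [hdf]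
  have hfac : (i.factorial : ℝ) ≠ 0 := Nat.cast_ne_zero.2 i.factorial_ne_zero
  field_simp

/-- B-spline expansion of the shifted Legendre polynomials: for `1 ≤ i ≤ n` and a clamped
knot vector on `[0,1]`, `L_i(t) = Σ_{j=0}^{n+m} φ_{j,i} N_{j,n}(t)` on `[0,1)`, where
`φ_{j,i} = Σ_{h=0}^{i} ((-i)_h (i+1)_h / (C(n,h)(h!)²)) e_h(T (j+1),…,T (j+n))`
with `e_h` the `h`-th elementary symmetric polynomial. -/
theorem shiftedLegendre_bspl_expansion (n m : ℕ) (T : ℕ → ℝ) (hmono : Monotone T)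
    (h0 : ∀ j ≤ n, T j = 0) (h1 : ∀ j, n + m + 1 ≤ j → T j = 1)
    (hmult : ∀ j ≤ n + m, T j < T (j + n + 1))
    (i : ℕ) (hi1 : 1 ≤ i) (hin : i ≤ n) :
    ∀ t ∈ Set.Ico (0:ℝ) 1,
      (_root_.shiftedLegendre i).eval t =
        ∑ j ∈ Finset.range (n + m + 1),
          (∑ h ∈ Finset.range (i + 1),
            (ascPochhammer ℝ h).eval (-(i : ℝ)) * (ascPochhammer ℝ h).eval ((i : ℝ) + 1) /
              ((n.choose h : ℝ) * ((Nat.factorial h : ℝ)) ^ 2) *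
              ∑ S ∈ Finset.powersetCard h (Finset.Icc 1 n), ∏ s ∈ S, T (j + s)) *
          bspl T n j t := by
  intro t ht
  rw [shiftedLegendre_eval]
  simp only [Finset.sum_mul]
  rw [Finset.sum_comm]
  refine Finset.sum_congr rfl fun h hh => ?_
  have hhi : h ≤ i := Nat.lt_succ_iff.1 (Finset.mem_range.1 hh)
  have hhn : h ≤ n := le_trans hhi hin
  have hP : (ascPochhammer ℝ h).eval (-(i:ℝ)) * (ascPochhammer ℝ h).eval ((i:ℝ) + 1)
      = ((-1:ℝ) ^ h * (i.choose h : ℝ) * ((i + h).choose h : ℝ)) * (h.factorial : ℝ) ^ 2 := by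
    rw [poch_neg, poch_pos, Nat.descFactorial_eq_factorial_mul_choose]
    push_cast
    ring
  have hmonex := monomial_expansion n m T hmono h0 h1 h hhn t ht
  have hfact : (h.factorial : ℝ) ≠ 0 := Nat.cast_ne_zero.2 h.factorial_ne_zero
  have hchoose : ((n.choose h : ℝ)) ≠ 0 := Nat.cast_ne_zero.2 (Nat.choose_pos hhn).ne'
  simp only [mul_assoc]
  rw [← Finset.mul_sum]
  have hmonex' : ∑ j ∈ Finset.range (n + m + 1),
      (∑ S ∈ Finset.powersetCard h (Finset.Icc 1 n), ∏ s ∈ S, T (j + s)) * bspl T n j t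
      = (n.choose h : ℝ) * t ^ h := hmonex.symm
  rw [hmonex', hP]
  field_simp
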